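/- arXiv:2501.10333 — 2 statements merged into one kernel-verified Lean document; each statement's English description precedes it below -/
import Mathlib

section
/- For every integer m ≥ 3 one has δ_1(1,m) ≥ δ_0(1,m); equivalently, with L = lcm{1,2,...,m-1}, the number of x ∈ {1,...,L} having exactly one divisor d with 1 < d < m is at least φ(L), where φ is Euler's totient function. -/
/-- `Llcm n m` is the least common multiple of the integers strictly between `n` and `m`,
i.e. of `{n+1, ..., m-1}`. -/
def Llcm (n m : ℕ) : ℕ := (Finset.Ioo n m).lcm id

/-- `delta r n m` is the density `δ_r(n,m)` of positive integers with exactly `r`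
divisors in the open interval `(n, m)`: the proportion of `x ∈ {1, ..., Llcm n m}`
having exactly `r` divisors `d` with `n < d < m`. -/
def delta (r n m : ℕ) : ℚ :=
  (((Finset.Icc 1 (Llcm n m)).filter
      (fun x => ((Finset.Ioo n m).filter (fun d => d ∣ x)).card = r)).card : ℚ) /
    (Llcm n m : ℚ)

/-!
Integers with no divisor in `(1, m)` are exactly the `x` coprime to `L = Llcm 1 m`, so there are
`φ(L)` of them among `L` consecutive integers. For a prime `p < m`, the map `x ↦ p * x mod L`
sends them to residues whose only divisor in `(1, m)` is `p`, and it is at most `p`-to-one.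
The images for `p = 2, 3, 5` are disjoint, and `1/2 + 1/3 + 1/5 > 1`; the cases `m < 6` are
checked by computation.
-/

open Finset

theorem Finset.sum_card_filter_eq_singleton_le {α β : Type*} [DecidableEq α] [DecidableEq β]
    (s : Finset α) (S : α → Finset β) (P : Finset β) :
    ∑ p ∈ P, #(s.filter (S · = {p})) ≤ #(s.filter fun x => #(S x) = 1) := by
  rw [← card_biUnion]
  · refine card_le_card (biUnion_subset.2 fun p _ x hx => ?_)
    rw [mem_filter] at hx ⊢
    exact ⟨hx.1, by rw [hx.2, card_singleton]⟩
  · intro p _ q _ hpq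
    refine disjoint_filter.2 fun x _ hp hq => hpq ?_
    exact singleton_injective (hp.symm.trans hq)

theorem card_le_mul_card_image_mul_mod {p e : ℕ} (A : Finset ℕ) (hA : ∀ x ∈ A, x < p * e) :
    #A ≤ p * #(A.image (p * · % (p * e))) := by
  refine card_le_mul_card_image A p fun b _ => ?_
  -- an element `x < p * e` of a fibre is determined by `x % e`, fixed on the fibre, and `x / e < p`
  refine (card_le_card_of_injOn (· / e) (t := range p) (fun x hx => ?_)
    fun x hx y hy hxy => ?_).trans (card_range p).le
  · rw [coe_range, Set.mem_Iio]
    exact Nat.div_lt_of_lt_mul (by rw [mul_comm]; exact hA x (mem_filter.1 hx).1)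
  · simp only [coe_filter, Set.mem_ofPred_eq] at hx hy
    have hp : 0 < p := Nat.pos_of_ne_zero (by rintro rfl; simpa using hA x hx.1)
    have hmod : x % e = y % e := by
      rw [← hy.2, Nat.mul_mod_mul_left, Nat.mul_mod_mul_left] at hx
      exact Nat.eq_of_mul_eq_mul_left hp hx.2
    rw [← Nat.div_add_mod x e, ← Nat.div_add_mod y e, hmod, show x / e = y / e from hxy]

theorem dvd_Llcm_of_mem {n m d : ℕ} (hd : d ∈ Ioo n m) : d ∣ Llcm n m :=
  dvd_lcm (f := id) hd

theorem Llcm_pos (n m : ℕ) : 0 < Llcm n m := by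
  refine Nat.pos_of_ne_zero fun h => ?_
  obtain ⟨d, hd, hd0⟩ := lcm_eq_zero_iff.1 h
  exact Nat.not_lt_zero n (hd0 ▸ (mem_Ioo.1 hd).1)

theorem Nat.Prime.lt_of_dvd_Llcm {n m p : ℕ} (hp : p.Prime) (h : p ∣ Llcm n m) : p < m := by
  obtain ⟨d, hd, hpd⟩ := (Prime.dvd_finsetProd_iff hp.prime id).1 (h.trans (lcm_dvd_prod _ _))
  rw [mem_Ioo] at hd
  exact (Nat.le_of_dvd (by rw [id]; omega) hpd).trans_lt hd.2

theorem lcm_Icc_one_eq_Llcm {m : ℕ} (hm : 2 ≤ m) : (Icc 1 (m - 1)).lcm id = Llcm 1 m := by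
  have : Icc 1 (m - 1) = insert 1 (Ioo 1 m) := by
    ext a
    simp only [mem_Icc, mem_insert, mem_Ioo]
    omega
  rw [this, lcm_insert, id, lcm_one_left, normalize_eq]
  rfl

theorem card_filter_Icc_Llcm_eq_card_filter_range (r n m : ℕ) :
    #((Icc 1 (Llcm n m)).filter fun x => #((Ioo n m).filter (· ∣ x)) = r) =
      #((range (Llcm n m)).filter fun x => #((Ioo n m).filter (· ∣ x)) = r) := by
  have hper : Function.Periodic (fun x => #((Ioo n m).filter (· ∣ x)) = r) (Llcm n m) :=
    fun x => by
      simp only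
      rw [filter_congr fun d hd => Nat.dvd_add_left (dvd_Llcm_of_mem hd)]
  rw [← Ico_add_one_right_eq_Icc, add_comm, Nat.filter_Ico_card_eq_of_periodic _ _ _ hper,
    Nat.count_eq_card_filter_range]

section

variable {m : ℕ}

theorem filter_dvd_eq_empty_iff_coprime {x : ℕ} :
    (Ioo 1 m).filter (· ∣ x) = ∅ ↔ (Llcm 1 m).Coprime x := by
  rw [filter_eq_empty_iff]
  constructor
  · intro h
    by_contra hcop
    obtain ⟨p, hp, hpL, hpx⟩ := Nat.Prime.not_coprime_iff_dvd.1 hcop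
    exact h (mem_Ioo.2 ⟨hp.one_lt, hp.lt_of_dvd_Llcm hpL⟩) hpx
  · intro hcop d hd hdx
    exact (mem_Ioo.1 hd).1.ne' ((hcop.coprime_dvd_left (dvd_Llcm_of_mem hd)).eq_one_of_dvd hdx)

theorem card_filter_card_eq_zero_eq_totient :
    #((range (Llcm 1 m)).filter fun x => #((Ioo 1 m).filter (· ∣ x)) = 0) =
      (Llcm 1 m).totient := by
  simp only [card_eq_zero, filter_dvd_eq_empty_iff_coprime]
  rfl

theorem filter_dvd_eq_singleton_of_modEq {p x y : ℕ} (hp : p.Prime) (hpm : p < m)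
    (hx : (Llcm 1 m).Coprime x) (hy : y ≡ p * x [MOD Llcm 1 m]) :
    (Ioo 1 m).filter (· ∣ y) = {p} := by
  ext d
  rw [mem_filter, mem_singleton]
  constructor
  · rintro ⟨hd, hdy⟩
    have hdL := dvd_Llcm_of_mem hd
    rw [hy.dvd_iff hdL, (hx.coprime_dvd_left hdL).dvd_mul_right, Nat.dvd_prime hp] at hdy
    exact hdy.resolve_left (mem_Ioo.1 hd).1.ne'
  · rintro rfl
    have hpI : d ∈ Ioo 1 m := mem_Ioo.2 ⟨hp.one_lt, hpm⟩
    exact ⟨hpI, (hy.dvd_iff (dvd_Llcm_of_mem hpI)).2 (dvd_mul_right _ _)⟩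

theorem totient_Llcm_le_mul_card_filter_eq_singleton {p : ℕ} (hp : p.Prime) (hpm : p < m) :
    (Llcm 1 m).totient ≤
      p * #((range (Llcm 1 m)).filter fun y => (Ioo 1 m).filter (· ∣ y) = {p}) := by
  rw [Nat.totient_eq_card_coprime]
  obtain ⟨e, hLe⟩ := dvd_Llcm_of_mem (mem_Ioo.2 ⟨hp.one_lt, hpm⟩)
  have hunits := card_le_mul_card_image_mul_mod ((range (Llcm 1 m)).filter (Llcm 1 m).Coprime)
    fun x hx => hLe ▸ mem_range.1 (mem_filter.1 hx).1
  rw [← hLe] at hunits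
  refine hunits.trans (Nat.mul_le_mul_left p (card_le_card fun y hy => ?_))
  obtain ⟨x, hx, rfl⟩ := mem_image.1 hy
  rw [mem_filter] at hx ⊢
  exact ⟨mem_range.2 (Nat.mod_lt _ (Llcm_pos 1 m)),
    filter_dvd_eq_singleton_of_modEq hp hpm hx.2 (Nat.mod_modEq _ _)⟩

theorem totient_Llcm_le_card_filter_card_eq_one (hm : 3 ≤ m) :
    (Llcm 1 m).totient ≤
      #((range (Llcm 1 m)).filter fun x => #((Ioo 1 m).filter (· ∣ x)) = 1) := by
  rcases Nat.lt_or_ge m 6 with hm6 | hm6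
  · interval_cases m <;> decide
  have h2 := totient_Llcm_le_mul_card_filter_eq_singleton Nat.prime_two (by omega : 2 < m)
  have h3 := totient_Llcm_le_mul_card_filter_eq_singleton Nat.prime_three (by omega : 3 < m)
  have h5 := totient_Llcm_le_mul_card_filter_eq_singleton Nat.prime_five (by omega : 5 < m)
  have hsum := sum_card_filter_eq_singleton_le (range (Llcm 1 m))
    (fun x => (Ioo 1 m).filter (· ∣ x)) {2, 3, 5}
  rw [sum_insert (by decide), sum_insert (by decide), sum_singleton] at hsum
  omega

end

/-- For every `m ≥ 3` one has `δ_1(1,m) ≥ δ_0(1,m)`; equivalently, with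
`L = lcm{1,...,m-1}`, the number of `x ∈ {1,...,L}` with exactly one divisor `d`,
`1 < d < m`, is at least `φ(L)`. -/
theorem delta_one_ge_delta_zero (m : ℕ) (hm : 3 ≤ m) :
    delta 0 1 m ≤ delta 1 1 m ∧
    Nat.totient ((Finset.Icc 1 (m - 1)).lcm id) ≤
      ((Finset.Icc 1 ((Finset.Icc 1 (m - 1)).lcm id)).filter
        (fun x => ((Finset.Ioo 1 m).filter (fun d => d ∣ x)).card = 1)).card := by
  have key := totient_Llcm_le_card_filter_card_eq_one hm
  rw [← card_filter_Icc_Llcm_eq_card_filter_range] at key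
  refine ⟨?_, by rwa [lcm_Icc_one_eq_Llcm (by omega)]⟩
  rw [delta, delta, div_le_div_iff_of_pos_right (by exact_mod_cast Llcm_pos 1 m),
    card_filter_Icc_Llcm_eq_card_filter_range, card_filter_card_eq_zero_eq_totient]
  exact_mod_cast key
end

section
/- One has δ_1(0) = δ_1(1) = 1/2, and the sequence (δ_1(i))_{i ≥ 0} is non-increasing: δ_1(i+1) ≤ δ_1(i) for all i ≥ 0. -/
/-!
Write `q = p_{i+1}`, so that `P(i+1) = P(i) · q` with `P(i)` and `q` coprime. By the Chinese
remainder theorem, on the residues modulo `P(i+1)` divisibility by `q` is independent of the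
pattern of divisibility by `p₀, ..., pᵢ`, which is periodic modulo `P(i)`; and exactly one
residue class modulo `q` is divisible by `q`. This gives the recursions
`δ₀(i+1) = (1 - 1/q) δ₀(i)` and `δ_{r+1}(i+1) = δ_r(i)/q + (1 - 1/q) δ_{r+1}(i)`.
By induction `δ₀(i) ≤ δ₁(i)`, hence `δ₁(i+1) - δ₁(i) = (δ₀(i) - δ₁(i))/q ≤ 0`.
-/

/-- `pp i` is the `i`-th prime (`pp 0 = 2`, `pp 1 = 3`, `pp 2 = 5`, ...). -/
noncomputable def pp (i : ℕ) : ℕ := Nat.nth Nat.Prime i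

/-- `PP i = p₀ · p₁ ⋯ p_i`, the product of the first `i+1` primes. -/
noncomputable def PP (i : ℕ) : ℕ := ∏ j ∈ Finset.range (i + 1), pp j

/-- `del r i` is the density `δ_r(i)` of positive integers having exactly `r`
prime divisors among `p₀, ..., p_i`: the proportion of `x ∈ {1, ..., PP i}`
divisible by exactly `r` of the primes `p₀, ..., p_i`. -/
noncomputable def del (r i : ℕ) : ℚ :=
  (((Finset.Icc 1 (PP i)).filter
      (fun x => ((Finset.range (i + 1)).filter (fun j => pp j ∣ x)).card = r)).card : ℚ) /
    (PP i : ℚ)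

/-- `dd k i` is the density `d_k(p_i)` of positive integers whose `k`-th smallest
prime factor is `p_i`: the proportion of `x ∈ {1, ..., PP i}` divisible by `p_i`
and by exactly `k-1` of the primes `p₀, ..., p_{i-1}`. -/
noncomputable def dd (k i : ℕ) : ℚ :=
  (((Finset.Icc 1 (PP i)).filter
      (fun x => pp i ∣ x ∧
        ((Finset.range i).filter (fun j => pp j ∣ x)).card = k - 1)).card : ℚ) /
    (PP i : ℚ)

open Finset Function

theorem Nat.count_and_mul_of_periodic {m n : ℕ} (hmn : m.Coprime n) {P Q : ℕ → Prop}
    [DecidablePred P] [DecidablePred Q] (hP : Periodic P m) (hQ : Periodic Q n) :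
    Nat.count (fun x => P x ∧ Q x) (m * n) = Nat.count P m * Nat.count Q n := by
  rcases Nat.eq_zero_or_pos m with rfl | hm
  · simp
  rcases Nat.eq_zero_or_pos n with rfl | hn
  · simp
  simp only [Nat.count_eq_card_filter_range, ← card_product]
  refine card_nbij (fun x => (x % m, x % n)) ?_ ?_ ?_
  · intro x hx
    simp only [mem_coe, mem_filter, mem_range, mem_product] at hx ⊢
    exact ⟨⟨Nat.mod_lt x hm, by rw [hP.map_mod_nat]; exact hx.2.1⟩,
      ⟨Nat.mod_lt x hn, by rw [hQ.map_mod_nat]; exact hx.2.2⟩⟩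
  · intro x hx y hy hxy
    simp only [mem_coe, mem_filter, mem_range, Prod.mk.injEq] at hx hy hxy
    exact Nat.ModEq.eq_of_lt_of_lt ((Nat.modEq_and_modEq_iff_modEq_mul hmn).1 hxy) hx.1 hy.1
  · rintro ⟨a, b⟩ hab
    simp only [mem_coe, mem_product, mem_filter, mem_range] at hab
    obtain ⟨⟨ha, hPa⟩, hb, hQb⟩ := hab
    set k := Nat.chineseRemainder hmn a b
    have hka : k % m = a := by rw [k.2.1, Nat.mod_eq_of_lt ha]
    have hkb : k % n = b := by rw [k.2.2, Nat.mod_eq_of_lt hb]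
    refine ⟨k, ?_, by simp [hka, hkb]⟩
    simp only [mem_coe, mem_filter, mem_range]
    refine ⟨Nat.chineseRemainder_lt_mul hmn a b hm.ne' hn.ne', ?_, ?_⟩
    · rw [← hP.map_mod_nat, hka]; exact hPa
    · rw [← hQ.map_mod_nat, hkb]; exact hQb

theorem Nat.count_dvd_self {q : ℕ} (hq : 0 < q) : Nat.count (q ∣ ·) q = 1 := by
  obtain ⟨n, rfl⟩ := Nat.exists_eq_add_of_lt hq
  rw [zero_add, Nat.count_succ', Nat.count_iff_forall_not.2 fun k hk => ?_]
  · simp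
  · exact Nat.not_dvd_of_pos_of_lt k.succ_pos (by omega)

theorem Nat.count_not_dvd_self {q : ℕ} (hq : 0 < q) : Nat.count (¬ q ∣ ·) q = q - 1 := by
  obtain ⟨n, rfl⟩ := Nat.exists_eq_add_of_lt hq
  rw [zero_add, Nat.count_succ', Nat.count_of_forall fun k hk => ?_]
  · simp
  · exact Nat.not_dvd_of_pos_of_lt k.succ_pos (by omega)

theorem Nat.periodic_dvd (q : ℕ) : Periodic (q ∣ ·) q := fun x => by
  simp [Nat.dvd_add_self_right]

lemma pp_prime (i : ℕ) : (pp i).Prime := Nat.prime_nth_prime i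

lemma pp_zero : pp 0 = 2 := Nat.nth_prime_zero_eq_two

lemma pp_one : pp 1 = 3 := Nat.nth_prime_one_eq_three

lemma PP_succ (i : ℕ) : PP (i + 1) = PP i * pp (i + 1) := prod_range_succ _ _

lemma PP_pos (i : ℕ) : 0 < PP i := prod_pos fun j _ => (pp_prime j).pos

lemma coprime_PP_pp_succ (i : ℕ) : (PP i).Coprime (pp (i + 1)) :=
  Nat.Coprime.prod_left fun j hj => (Nat.coprime_primes (pp_prime j) (pp_prime (i + 1))).2
    ((Nat.nth_strictMono Nat.infinite_setOfPred_prime (by simpa [Nat.lt_succ_iff] using hj)).ne)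

noncomputable def primeDvdCount (i x : ℕ) : ℕ := #{j ∈ range (i + 1) | pp j ∣ x}

lemma primeDvdCount_periodic (i : ℕ) : Periodic (primeDvdCount i) (PP i) := fun x => by
  refine congrArg card (filter_congr fun j hj => ?_)
  exact Nat.dvd_add_left (dvd_prod_of_mem pp hj)

lemma primeDvdCount_succ (i x : ℕ) :
    primeDvdCount (i + 1) x = primeDvdCount i x + if pp (i + 1) ∣ x then 1 else 0 := by
  rw [primeDvdCount, range_add_one, filter_insert]
  split_ifs with h
  · rw [card_insert_of_notMem (by simp)]; rfl
  · rfl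

lemma del_eq_count (r i : ℕ) :
    del r i = Nat.count (primeDvdCount i · = r) (PP i) / PP i := by
  rw [del, ← Nat.filter_Ico_card_eq_of_periodic 1 _ (primeDvdCount i · = r)
    ((primeDvdCount_periodic i).comp (· = r)), add_comm 1, Ico_add_one_right_eq_Icc]
  rfl

lemma count_primeDvdCount_succ (r i : ℕ) :
    Nat.count (primeDvdCount (i + 1) · = r) (PP (i + 1)) =
      Nat.count (primeDvdCount i · + 1 = r) (PP i) +
        Nat.count (primeDvdCount i · = r) (PP i) * (pp (i + 1) - 1) := by
  have hq : 0 < pp (i + 1) := (pp_prime (i + 1)).pos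
  have hcop := coprime_PP_pp_succ i
  have hper (s : ℕ → Prop) : Periodic (fun x => s (primeDvdCount i x)) (PP i) :=
    fun x => congrArg s (primeDvdCount_periodic i x)
  have hdvd : (fun x => primeDvdCount (i + 1) x = r ∧ pp (i + 1) ∣ x) =
      fun x => primeDvdCount i x + 1 = r ∧ pp (i + 1) ∣ x := by
    ext x; simp +contextual [primeDvdCount_succ]
  have hndvd : (fun x => primeDvdCount (i + 1) x = r ∧ ¬ pp (i + 1) ∣ x) =
      fun x => primeDvdCount i x = r ∧ ¬ pp (i + 1) ∣ x := by
    ext x; simp +contextual [primeDvdCount_succ]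
  rw [PP_succ, Nat.count_eq_card_filter_range,
    ← card_filter_add_card_filter_not (p := (pp (i + 1) ∣ ·)), filter_filter, filter_filter,
    ← Nat.count_eq_card_filter_range, ← Nat.count_eq_card_filter_range]
  simp only [hdvd, hndvd]
  rw [Nat.count_and_mul_of_periodic hcop (hper (· + 1 = r)) (Nat.periodic_dvd _),
    Nat.count_and_mul_of_periodic hcop (hper (· = r)) fun x => congrArg Not (Nat.periodic_dvd _ x),
    Nat.count_dvd_self hq, Nat.count_not_dvd_self hq, mul_one]

lemma del_nonneg (r i : ℕ) : 0 ≤ del r i := by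
  unfold del; positivity

lemma del_zero_succ (i : ℕ) :
    del 0 (i + 1) = (1 - 1 / (pp (i + 1) : ℚ)) * del 0 i := by
  have hq : 1 ≤ pp (i + 1) := (pp_prime (i + 1)).one_le
  have hP : (PP i : ℚ) ≠ 0 := by exact_mod_cast (PP_pos i).ne'
  rw [del_eq_count, del_eq_count, count_primeDvdCount_succ, PP_succ]
  simp only [Nat.add_one_ne_zero, Nat.count_false, zero_add]
  push_cast [Nat.cast_sub hq]
  field_simp

lemma del_succ_succ (r i : ℕ) :
    del (r + 1) (i + 1) = del r i / pp (i + 1) + (1 - 1 / (pp (i + 1) : ℚ)) * del (r + 1) i := by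
  have hq : 1 ≤ pp (i + 1) := (pp_prime (i + 1)).one_le
  have hP : (PP i : ℚ) ≠ 0 := by exact_mod_cast (PP_pos i).ne'
  rw [del_eq_count, del_eq_count, del_eq_count, count_primeDvdCount_succ, PP_succ]
  simp only [Nat.add_right_cancel_iff]
  push_cast [Nat.cast_sub hq]
  field_simp

lemma del_zero_zero : del 0 0 = 1 / 2 := by
  simp [del_eq_count, PP, pp_zero, primeDvdCount, Nat.count_succ, filter_singleton]

lemma del_one_zero : del 1 0 = 1 / 2 := by
  simp [del_eq_count, PP, pp_zero, primeDvdCount, Nat.count_succ, filter_singleton]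

lemma del_zero_le_del_one (i : ℕ) : del 0 i ≤ del 1 i := by
  induction i with
  | zero => rw [del_zero_zero, del_one_zero]
  | succ i ih =>
    have hq : (1 : ℚ) ≤ pp (i + 1) := by exact_mod_cast (pp_prime (i + 1)).one_le
    have h1q : 0 ≤ 1 - 1 / (pp (i + 1) : ℚ) := by
      rw [sub_nonneg]; exact div_le_one_of_le₀ hq (by positivity)
    rw [del_zero_succ, del_succ_succ]
    exact le_add_of_nonneg_of_le (by have := del_nonneg 0 i; positivity)
      (mul_le_mul_of_nonneg_left ih h1q)

/-- `δ_1(0) = δ_1(1) = 1/2`, and `(δ_1(i))_{i ≥ 0}` is non-increasing. -/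
theorem del_one_nonincreasing :
    del 1 0 = 1 / 2 ∧ del 1 1 = 1 / 2 ∧ ∀ i : ℕ, del 1 (i + 1) ≤ del 1 i := by
  refine ⟨del_one_zero, ?_, fun i => ?_⟩
  · rw [del_succ_succ, del_zero_zero, del_one_zero, pp_one]; norm_num
  · have hq : (0 : ℚ) < pp (i + 1) := by exact_mod_cast (pp_prime (i + 1)).pos
    calc del 1 (i + 1) = del 0 i / pp (i + 1) + (1 - 1 / (pp (i + 1) : ℚ)) * del 1 i :=
          del_succ_succ 0 i
      _ ≤ del 1 i / pp (i + 1) + (1 - 1 / (pp (i + 1) : ℚ)) * del 1 i := by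
          gcongr; exact del_zero_le_del_one i
      _ = del 1 i := by ring
end
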